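/- arXiv:math-ph/0102009 — 2 statements merged into one kernel-verified Lean document; each statement's English description precedes it below -/
import Mathlib

section
/- The inflation and Toom operations satisfy the commutation inclusion Q(R(S)) ⊆ R(Q(S)) for every S ⊆ Z^2. -/
open Set

abbrev Pt := ℤ × ℤ

/-- Adjacency in the graph `G`: neighbor increments
`(0,1), (0,-1), (1,0), (-1,0), (-1,1), (1,-1)`. -/
def adjG (p q : Pt) : Prop :=
  q - p ∈ ({(0,1), (0,-1), (1,0), (-1,0), (-1,1), (1,-1)} : Set Pt)

/-- Reachability within a set `S` along edges of `G`. -/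
def ReachIn (S : Set Pt) (p q : Pt) : Prop :=
  Relation.ReflTransGen (fun a b => a ∈ S ∧ b ∈ S ∧ adjG a b) p q

/-- `S` is connected in the graph `G`. -/
def ConnectedIn (S : Set Pt) : Prop :=
  ∀ p ∈ S, ∀ q ∈ S, ReachIn S p q

/-- The tile with center `p`. -/
def tile (p : Pt) : Set Pt := {p, p + (1, 0), p + (0, 1)}

/-- Inflation operation `Q`. -/
def QOp (S : Set Pt) : Set Pt := ⋃ a ∈ S, tile a

/-- Toom's rule `R`: majority of self, north, east. -/
def ROp (S : Set Pt) : Set Pt := {p | 2 ≤ (S ∩ tile p).ncard}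

/-- The biased Toom rule `R⁺ = Q ∘ R ∘ R`. -/
def RPlus (S : Set Pt) : Set Pt := QOp (ROp (ROp S))

/-!
Both operators are monotone, and a point `x` of `Q(R(S))` lies in a tile `tile a` containing two
points `u ≠ v` of `S`, so it suffices that two points of `tile x` are covered by
`tile u ∪ tile v`. If `x ∈ {u, v}` its whole tile is covered, and if `x = a` the points `u` and
`v` themselves are. Otherwise `x` is one of the corners `a + (1, 0)`, `a + (0, 1)` and `{u, v}`
consists of `a` and the other corner: then `x ∈ tile a`, and `a + (1, 1)` lies in the tile of
the other corner.
-/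

lemma tile_finite (p : Pt) : (tile p).Finite :=
  ((finite_singleton _).insert _).insert _

lemma mem_tile_iff {p a : Pt} : p ∈ tile a ↔ p = a ∨ p = a + (1, 0) ∨ p = a + (0, 1) := by
  simp only [tile, mem_insert_iff, mem_singleton_iff]

lemma mem_tile_self (p : Pt) : p ∈ tile p := mem_insert p _

lemma tile_subset_QOp {S : Set Pt} {a : Pt} (ha : a ∈ S) : tile a ⊆ QOp S :=
  subset_biUnion_of_mem ha

lemma mem_ROp_iff {S : Set Pt} {x : Pt} :
    x ∈ ROp S ↔ ∃ p ∈ S ∩ tile x, ∃ q ∈ S ∩ tile x, p ≠ q := by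
  rw [ROp, mem_ofPred_eq, Nat.succ_le_iff,
    one_lt_ncard_iff ((tile_finite x).subset inter_subset_right)]
  simp only [exists_and_left]

lemma ROp_mono : Monotone ROp := fun _ _ hST _ hx =>
  let ⟨p, hp, q, hq, hpq⟩ := mem_ROp_iff.1 hx
  mem_ROp_iff.2 ⟨p, ⟨hST hp.1, hp.2⟩, q, ⟨hST hq.1, hq.2⟩, hpq⟩

lemma mem_ROp_of_tile_subset {S : Set Pt} {x : Pt} (h : tile x ⊆ S) : x ∈ ROp S :=
  mem_ROp_iff.2 ⟨x, ⟨h (mem_tile_self x), mem_tile_self x⟩, x + (1, 0),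
    ⟨h (by simp [tile]), by simp [tile]⟩, by simp⟩

lemma mem_ROp_tile_union {a u v x : Pt} (hu : u ∈ tile a) (hv : v ∈ tile a) (huv : u ≠ v)
    (hx : x ∈ tile a) : x ∈ ROp (tile u ∪ tile v) := by
  by_cases hxuv : x = u ∨ x = v
  · apply mem_ROp_of_tile_subset
    rcases hxuv with rfl | rfl
    exacts [subset_union_left, subset_union_right]
  push Not at hxuv
  rw [mem_ROp_iff]
  rcases mem_tile_iff.1 hx with rfl | hx | hx
  · exact ⟨u, ⟨.inl (mem_tile_self u), hu⟩, v, ⟨.inr (mem_tile_self v), hv⟩, huv⟩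
  all_goals
    refine ⟨x, ⟨?_, mem_tile_self x⟩, a + (1, 1), ⟨?_, ?_⟩, ?_⟩ <;>
      rcases mem_tile_iff.1 hu with rfl | rfl | rfl <;>
      rcases mem_tile_iff.1 hv with rfl | rfl | rfl <;>
      simp_all [tile, add_assoc, Prod.mk_add_mk]

/-- Commutation property: `Q(R(S)) ⊆ R(Q(S))`. -/
theorem QR_subset_RQ (S : Set Pt) : QOp (ROp S) ⊆ ROp (QOp S) := by
  intro x hx
  obtain ⟨a, ha, hxa⟩ := mem_iUnion₂.1 hx
  obtain ⟨u, hu, v, hv, huv⟩ := mem_ROp_iff.1 ha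
  exact ROp_mono (union_subset (tile_subset_QOp hu.1) (tile_subset_QOp hv.1))
    (mem_ROp_tile_union hu.2 hv.2 huv hxa)
end

section
/- For every connected set S ⊆ Z^2 and every α, the thickness defined via arbitrary cuts equals the thickness defined via connected cuts with offset zero: Θ(S,α) = θ(S,α,0). -/
open Set

/-- A triangle is given by parameters `(a,b,c)`; it is
`L(a,b,c) = {(α,β) : -α ≤ a, -β ≤ b, α+β ≤ c}` with span `a+b+c`. -/
abbrev Tri := ℝ × ℝ × ℝ

def triSpan (t : Tri) : ℝ := t.1 + t.2.1 + t.2.2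

/-- The lattice point `p` lies in the deflation by `d` of the triangle `t`. -/
def inDefl (t : Tri) (d : ℝ) (p : Pt) : Prop :=
  -(p.1 : ℝ) ≤ t.1 - d ∧ -(p.2 : ℝ) ≤ t.2.1 - d ∧ (p.1 : ℝ) + (p.2 : ℝ) ≤ t.2.2 - d

/-- `span(E, d)`: the minimum total span of a finite family of (nonempty)
triangles whose `d`-deflations cover `E`. -/
noncomputable def spanD (E : Set Pt) (d : ℝ) : ℝ :=
  sInf { s : ℝ | ∃ T : Finset Tri, (∀ t ∈ T, 0 ≤ triSpan t) ∧
    (∀ p ∈ E, ∃ t ∈ T, inDefl t d p) ∧ s = ∑ t ∈ T, triSpan t }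

/-- `Span(E) = span(E, 2)`. -/
noncomputable def SpanE (E : Set Pt) : ℝ := spanD E 2

/-- `(C, A1, A2)` is a cut of `S`: disjoint subsets of `S` such that every
path in `S` from `A1` to `A2` passes through `C`. -/
def IsCut (S C A1 A2 : Set Pt) : Prop :=
  C ⊆ S ∧ A1 ⊆ S ∧ A2 ⊆ S ∧
  Disjoint C A1 ∧ Disjoint C A2 ∧ Disjoint A1 A2 ∧
  ∀ p ∈ A1, ∀ q ∈ A2, ¬ ReachIn (S \ C) p q

/-- `bdry S A`: elements of `S \ A` adjacent to an element of `A`. -/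
def bdry (S A : Set Pt) : Set Pt := {b | b ∈ S ∧ b ∉ A ∧ ∃ a ∈ A, adjG a b}

def IsClosedCut (S C A1 A2 : Set Pt) : Prop :=
  IsCut S C A1 A2 ∧ bdry S A1 ∪ bdry S A2 ⊆ C

def IsConnCut (S C A1 A2 : Set Pt) : Prop :=
  IsCut S C A1 A2 ∧ ConnectedIn (A1 ∪ C) ∧ ConnectedIn (A2 ∪ C)

/-- `θ(S, α, β)`: the smallest `k` such that `S` has a connected cut with
cutting set of size `k` and `min_j Span(A_j ∪ C) > α k + β`; `∞` if none. -/
noncomputable def theta (S : Set Pt) (α β : ℝ) : ℕ∞ :=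
  sInf { k : ℕ∞ | ∃ C A1 A2 : Set Pt, IsConnCut S C A1 A2 ∧ C.Finite ∧
    k = (C.ncard : ℕ∞) ∧
    α * (C.ncard : ℝ) + β < min (SpanE (A1 ∪ C)) (SpanE (A2 ∪ C)) }

/-- `Θ(S, α)`: as `θ` but over arbitrary (not necessarily connected) cuts. -/
noncomputable def bigTheta (S : Set Pt) (α : ℝ) : ℕ∞ :=
  sInf { k : ℕ∞ | ∃ C A1 A2 : Set Pt, IsCut S C A1 A2 ∧ C.Finite ∧
    k = (C.ncard : ℕ∞) ∧
    α * (C.ncard : ℝ) < min (SpanE (A1 ∪ C)) (SpanE (A2 ∪ C)) }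

/-
An arbitrary cut `(C, A₁, A₂)` with `α |C| < Span (Aⱼ ∪ C)` is turned into a connected one
without enlarging `C`. First close the sides: replace `Aⱼ` by everything reachable from it in
`S \ C`. If some `Aⱼ ∪ C` is still disconnected, split it into two parts with no edge between
them; `Span` is subadditive and `|C|` additive over the parts, so on one part `U` the inequality
survives for `C ∩ U`, and `C ∩ U` cuts `Aⱼ ∩ U` off from the rest of `S`. Because `S` is
connected, `C` meets the other part, so `|C ∩ U| < |C|` and we conclude by induction on `|C|`.
Once both `Aⱼ ∪ C` are connected, shrink them to finite connected sets containing `C`. For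
`α ≤ 0` a single vertex of `C` already is a connected cut.
-/

section Graph

theorem adjG.symm {p q : Pt} (h : adjG p q) : adjG q p := by
  simp only [adjG, Set.mem_insert_iff, Set.mem_singleton_iff] at h ⊢
  have e : p - q = -(q - p) := by ring
  rcases h with h | h | h | h | h | h <;> rw [e, h] <;> decide

variable {T U : Set Pt} {p q x : Pt}

theorem ReachIn.symm (h : ReachIn T p q) : ReachIn T q p :=
  have : Std.Symm fun a b : Pt => a ∈ T ∧ b ∈ T ∧ adjG a b :=
    ⟨fun _ _ hab => ⟨hab.2.1, hab.1, hab.2.2.symm⟩⟩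
  Relation.ReflTransGen.stdSymm.symm _ _ h

theorem ReachIn.mono (h : ReachIn T p q) (hTU : T ⊆ U) : ReachIn U p q :=
  Relation.ReflTransGen.mono (p := fun a b => a ∈ U ∧ b ∈ U ∧ adjG a b)
    (fun _ _ hab => ⟨hTU hab.1, hTU hab.2.1, hab.2.2⟩) _ _ h

def IsAdjClosed (T U : Set Pt) : Prop :=
  ∀ a ∈ T, ∀ b ∈ T, adjG a b → a ∈ U → b ∈ U

theorem IsAdjClosed.compl (hU : IsAdjClosed T U) : IsAdjClosed T Uᶜ :=
  fun a ha b hb hab haU hbU => haU (hU b hb a ha hab.symm hbU)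

theorem ReachIn.mem_of_isAdjClosed (h : ReachIn T p q) (hU : IsAdjClosed T U) (hp : p ∈ U) :
    q ∈ U := by
  induction h with
  | refl => exact hp
  | tail _ step ih => exact hU _ step.1 _ step.2.1 step.2.2 ih

theorem ReachIn.mem_right (h : ReachIn T p q) (hp : p ∈ T) : q ∈ T :=
  h.mem_of_isAdjClosed (fun _ _ _ hb _ _ => hb) hp

def reachSet (T A : Set Pt) : Set Pt := {x | ∃ a ∈ A, ReachIn T a x}

theorem subset_reachSet {A : Set Pt} : A ⊆ reachSet T A := fun a ha => ⟨a, ha, .refl⟩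

theorem reachSet_subset {A : Set Pt} (hA : A ⊆ T) : reachSet T A ⊆ T :=
  fun _ ⟨_, ha, hax⟩ => hax.mem_right (hA ha)

theorem isAdjClosed_reachSet {A : Set Pt} : IsAdjClosed T (reachSet T A) :=
  fun _ ha _ hb hab ⟨a₀, ha₀, h⟩ => ⟨a₀, ha₀, h.tail ⟨ha, hb, hab⟩⟩

theorem exists_isAdjClosed_of_not_connectedIn (h : ¬ConnectedIn T) :
    ∃ U, IsAdjClosed T U ∧ ∃ p ∈ T, p ∈ U ∧ ∃ q ∈ T, q ∉ U := by
  simp only [ConnectedIn, not_forall] at h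
  obtain ⟨p, hp, q, hq, hpq⟩ := h
  exact ⟨{x | ReachIn T p x}, fun a ha b hb hab hpa => hpa.tail ⟨ha, hb, hab⟩,
    p, hp, .refl, q, hq, hpq⟩

theorem connectedIn_of_forall_reachIn (h : ∀ p ∈ T, ReachIn T p x) : ConnectedIn T :=
  fun p hp q hq => (h p hp).trans (h q hq).symm

theorem connectedIn_singleton (c : Pt) : ConnectedIn {c} :=
  connectedIn_of_forall_reachIn (x := c) fun _ hp => hp ▸ .refl

theorem ConnectedIn.insert (hT : ConnectedIn T) (hp : p ∈ T) (hpq : adjG p q) :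
    ConnectedIn (insert q T) := by
  refine connectedIn_of_forall_reachIn (x := p) fun x hx => ?_
  rcases hx with rfl | hx
  · exact .single ⟨mem_insert _ _, mem_insert_of_mem _ hp, hpq.symm⟩
  · exact (hT x hx p hp).mono (subset_insert _ _)

theorem ReachIn.exists_finite_connectedIn (h : ReachIn T p q) (hp : p ∈ T) :
    ∃ P ⊆ T, P.Finite ∧ p ∈ P ∧ q ∈ P ∧ ConnectedIn P := by
  induction h with
  | refl => exact ⟨{p}, singleton_subset_iff.2 hp, finite_singleton p, rfl, rfl,
      connectedIn_singleton p⟩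
  | tail _ step ih =>
    obtain ⟨P, hPT, hP, hpP, haP, hPc⟩ := ih
    exact ⟨insert _ P, insert_subset step.2.1 hPT, hP.insert _, mem_insert_of_mem _ hpP,
      mem_insert _ _, hPc.insert haP step.2.2⟩

theorem ConnectedIn.exists_finite_connectedIn_between {W : Set Pt} (hT : ConnectedIn T)
    (hW : W.Finite) (hWT : W ⊆ T) : ∃ H, W ⊆ H ∧ H ⊆ T ∧ H.Finite ∧ ConnectedIn H := by
  rcases W.eq_empty_or_nonempty with rfl | ⟨w₀, hw₀⟩
  · exact ⟨∅, subset_rfl, empty_subset _, finite_empty, fun _ h => h.elim⟩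
  choose P hPT hP hw₀P hwP hPc using fun w (hw : w ∈ W) =>
    (hT w₀ (hWT hw₀) w (hWT hw)).exists_finite_connectedIn (hWT hw₀)
  refine ⟨⋃ w, ⋃ hw : w ∈ W, P w hw, fun w hw => mem_iUnion₂.2 ⟨w, hw, hwP w hw⟩,
    iUnion₂_subset hPT, hW.biUnion' hP, connectedIn_of_forall_reachIn (x := w₀) ?_⟩
  intro p hp
  obtain ⟨w, hw, hpw⟩ := mem_iUnion₂.1 hp
  exact (hPc w hw p hpw w₀ (hw₀P w hw)).mono (subset_iUnion₂ (s := P) w hw)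

end Graph

section Span

variable {E F : Set Pt} {d : ℝ}

def coverSpans (E : Set Pt) (d : ℝ) : Set ℝ :=
  { s : ℝ | ∃ T : Finset Tri, (∀ t ∈ T, 0 ≤ triSpan t) ∧
    (∀ p ∈ E, ∃ t ∈ T, inDefl t d p) ∧ s = ∑ t ∈ T, triSpan t }

theorem spanD_eq_sInf : spanD E d = sInf (coverSpans E d) := rfl

theorem nonneg_of_mem_coverSpans {s : ℝ} (hs : s ∈ coverSpans E d) : 0 ≤ s := by
  obtain ⟨T, hT, -, rfl⟩ := hs
  exact Finset.sum_nonneg hT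

theorem bddBelow_coverSpans : BddBelow (coverSpans E d) :=
  ⟨0, fun _ => nonneg_of_mem_coverSpans⟩

theorem spanD_nonneg : 0 ≤ spanD E d :=
  Real.sInf_nonneg fun _ => nonneg_of_mem_coverSpans

theorem coverSpans_nonempty (hd : 0 ≤ d) (hE : E.Finite) : (coverSpans E d).Nonempty := by
  let tri (p : Pt) : Tri := (d - p.1, d - p.2, d + p.1 + p.2)
  refine ⟨_, hE.toFinset.image tri, ?_, fun p hp => ⟨tri p, ?_, ?_⟩, rfl⟩
  · simp only [Finset.forall_mem_image, triSpan, tri]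
    intro _ _
    linarith
  · exact Finset.mem_image_of_mem _ (hE.mem_toFinset.2 hp)
  · refine ⟨?_, ?_, ?_⟩ <;> simp only [tri] <;> linarith

theorem spanD_mono (hd : 0 ≤ d) (hEF : E ⊆ F) (hF : F.Finite) : spanD E d ≤ spanD F d := by
  refine csInf_le_csInf bddBelow_coverSpans (coverSpans_nonempty hd hF) ?_
  rintro s ⟨T, hT, hcov, rfl⟩
  exact ⟨T, hT, fun p hp => hcov p (hEF hp), rfl⟩

theorem three_mul_le_spanD (hd : 0 ≤ d) (hE : E.Finite) (hne : E.Nonempty) :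
    3 * d ≤ spanD E d := by
  refine le_csInf (coverSpans_nonempty hd hE) ?_
  rintro s ⟨T, hT, hcov, rfl⟩
  obtain ⟨p, hp⟩ := hne
  obtain ⟨t, ht, h₁, h₂, h₃⟩ := hcov p hp
  have : 3 * d ≤ triSpan t := by simp only [triSpan]; linarith
  exact this.trans (Finset.single_le_sum hT ht)

theorem spanD_empty : spanD ∅ d = 0 :=
  (csInf_le bddBelow_coverSpans ⟨∅, by simp, by simp, by simp⟩).antisymm spanD_nonneg

theorem nonempty_of_spanD_pos (h : 0 < spanD E d) : E.Nonempty := by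
  rcases E.eq_empty_or_nonempty with rfl | hE
  · exact (h.ne' spanD_empty).elim
  · exact hE

theorem finite_setOf_inDefl (t : Tri) (d : ℝ) : {p : Pt | inDefl t d p}.Finite := by
  refine (finite_Icc ((⌈d - t.1⌉, ⌈d - t.2.1⌉) : Pt)
    (⌊t.2.1 + t.2.2 - 2 * d⌋, ⌊t.1 + t.2.2 - 2 * d⌋)).subset ?_
  rintro ⟨x, y⟩ ⟨h₁, h₂, h₃⟩
  simp only [mem_Icc, Prod.mk_le_mk, Int.ceil_le, Int.le_floor] at h₁ h₂ h₃ ⊢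
  refine ⟨⟨?_, ?_⟩, ?_, ?_⟩ <;> linarith

theorem finite_of_spanD_pos (h : 0 < spanD E d) : E.Finite := by
  by_contra hE
  have : coverSpans E d = ∅ := by
    refine eq_empty_iff_forall_notMem.2 fun _ ⟨T, _, hcov, _⟩ => hE ?_
    refine (T.finite_toSet.biUnion fun t _ => finite_setOf_inDefl t d).subset fun p hp => ?_
    obtain ⟨t, ht, hpt⟩ := hcov p hp
    exact mem_biUnion ht hpt
  rw [spanD_eq_sInf, this, Real.sInf_empty] at h
  exact lt_irrefl 0 h

theorem spanD_union_le (hd : 0 ≤ d) (hE : E.Finite) (hF : F.Finite) :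
    spanD (E ∪ F) d ≤ spanD E d + spanD F d := by
  classical
  have key : ∀ s ∈ coverSpans E d, ∀ s' ∈ coverSpans F d, spanD (E ∪ F) d ≤ s + s' := by
    rintro _ ⟨T, hT, hcov, rfl⟩ _ ⟨T', hT', hcov', rfl⟩
    have hmem : ∑ t ∈ T ∪ T', triSpan t ∈ coverSpans (E ∪ F) d := by
      refine ⟨T ∪ T', fun t ht => (Finset.mem_union.1 ht).elim (hT t) (hT' t), ?_, rfl⟩
      rintro p (hp | hp)
      · obtain ⟨t, ht, hpt⟩ := hcov p hp
        exact ⟨t, Finset.mem_union_left _ ht, hpt⟩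
      · obtain ⟨t, ht, hpt⟩ := hcov' p hp
        exact ⟨t, Finset.mem_union_right _ ht, hpt⟩
    have hinter : 0 ≤ ∑ t ∈ T ∩ T', triSpan t :=
      Finset.sum_nonneg fun t ht => hT t (Finset.mem_inter.1 ht).1
    have := Finset.sum_union_inter (s₁ := T) (s₂ := T') (f := triSpan)
    exact (csInf_le bddBelow_coverSpans hmem).trans (by linarith)
  have hE' : ∀ s' ∈ coverSpans F d, spanD (E ∪ F) d - s' ≤ spanD E d := fun s' hs' =>
    le_csInf (coverSpans_nonempty hd hE) fun s hs => by linarith [key s hs s' hs']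
  have hF' : spanD (E ∪ F) d - spanD E d ≤ spanD F d :=
    le_csInf (coverSpans_nonempty hd hF) fun s' hs' => by linarith [hE' s' hs']
  linarith

end Span

section Cut

variable {S C A1 A2 B1 B2 F1 F2 W : Set Pt} {α : ℝ}

theorem IsCut.symm (h : IsCut S C A1 A2) : IsCut S C A2 A1 :=
  let ⟨hC, h1, h2, hC1, hC2, h12, hsep⟩ := h
  ⟨hC, h2, h1, hC2, hC1, h12.symm, fun p hp q hq hpq => hsep q hq p hp hpq.symm⟩

theorem IsCut.mono (h : IsCut S C A1 A2) (hB1 : B1 ⊆ A1) (hB2 : B2 ⊆ A2) : IsCut S C B1 B2 :=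
  let ⟨hC, h1, h2, hC1, hC2, h12, hsep⟩ := h
  ⟨hC, hB1.trans h1, hB2.trans h2, hC1.mono_right hB1, hC2.mono_right hB2,
    h12.mono hB1 hB2, fun p hp q hq => hsep p (hB1 hp) q (hB2 hq)⟩

theorem IsCut.nonempty_of_lt_spanE (hS : ConnectedIn S) (h : IsCut S C A1 A2)
    (hlt : α * C.ncard < min (SpanE (A1 ∪ C)) (SpanE (A2 ∪ C))) : C.Nonempty := by
  rcases C.eq_empty_or_nonempty with rfl | hC
  · simp only [ncard_empty, CharP.cast_eq_zero, mul_zero, union_empty, lt_min_iff] at hlt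
    obtain ⟨a1, ha1⟩ := nonempty_of_spanD_pos hlt.1
    obtain ⟨a2, ha2⟩ := nonempty_of_spanD_pos hlt.2
    have hsep := h.2.2.2.2.2.2 a1 ha1 a2 ha2
    rw [sdiff_empty] at hsep
    exact (hsep (hS a1 (h.2.1 ha1) a2 (h.2.2.1 ha2))).elim
  · exact hC

theorem IsCut.exists_isClosedCut (h : IsCut S C A1 A2) :
    ∃ B1 B2, A1 ⊆ B1 ∧ A2 ⊆ B2 ∧ IsClosedCut S C B1 B2 := by
  obtain ⟨hCS, hA1, hA2, hCA1, hCA2, -, hsep⟩ := h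
  have hT : ∀ {A}, A ⊆ S → Disjoint C A → reachSet (S \ C) A ⊆ S \ C := fun hA hCA =>
    reachSet_subset fun a ha => ⟨hA ha, hCA.notMem_of_mem_right ha⟩
  have hsep' : ∀ x ∈ reachSet (S \ C) A1, ∀ y ∈ reachSet (S \ C) A2,
      ¬ReachIn (S \ C) x y := by
    rintro x ⟨a1, ha1, h1⟩ y ⟨a2, ha2, h2⟩ hxy
    exact hsep a1 ha1 a2 ha2 (h1.trans (hxy.trans h2.symm))
  have hbdry : ∀ {A}, A ⊆ S → Disjoint C A → bdry S (reachSet (S \ C) A) ⊆ C := by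
    rintro A hA hCA b ⟨hb, hbB, a, ha, hab⟩
    by_contra hbC
    exact hbB (isAdjClosed_reachSet a (hT hA hCA ha) b ⟨hb, hbC⟩ hab ha)
  exact ⟨_, _, subset_reachSet, subset_reachSet,
    ⟨hCS, (hT hA1 hCA1).trans sdiff_subset, (hT hA2 hCA2).trans sdiff_subset,
      disjoint_sdiff_right.mono_right (hT hA1 hCA1), disjoint_sdiff_right.mono_right (hT hA2 hCA2),
      disjoint_left.2 fun x h1 h2 => hsep' x h1 x h2 .refl, hsep'⟩,
    union_subset (hbdry hA1 hCA1) (hbdry hA2 hCA2)⟩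

theorem IsClosedCut.symm (h : IsClosedCut S C A1 A2) : IsClosedCut S C A2 A1 :=
  ⟨h.1.symm, union_comm (bdry S A1) _ ▸ h.2⟩

theorem IsClosedCut.mem_union_of_adjG {a b : Pt} (h : IsClosedCut S C A1 A2) (ha : a ∈ A1)
    (hb : b ∈ S) (hab : adjG a b) : b ∈ A1 ∪ C := by
  by_cases hbA : b ∈ A1
  · exact Or.inl hbA
  · exact Or.inr (h.2 (Or.inl ⟨hb, hbA, a, ha, hab⟩))

theorem IsClosedCut.isCut_inter (h : IsClosedCut S C A1 A2) (hW : IsAdjClosed (A1 ∪ C) W) :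
    IsCut S (C ∩ W) (A1 ∩ W) (S \ ((A1 ∪ C) ∩ W)) := by
  have hcl : IsAdjClosed (S \ (C ∩ W)) (A1 ∩ W) := by
    rintro a - b ⟨hb, hbCW⟩ hab ⟨ha1, haW⟩
    have hbZ := h.mem_union_of_adjG ha1 hb hab
    have hbW : b ∈ W := hW a (Or.inl ha1) b hbZ hab haW
    exact ⟨hbZ.resolve_right fun hbC => hbCW ⟨hbC, hbW⟩, hbW⟩
  refine ⟨inter_subset_left.trans h.1.1, inter_subset_left.trans h.1.2.1, sdiff_subset,
    h.1.2.2.2.1.mono inter_subset_left inter_subset_left,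
    disjoint_left.2 fun x hx hx' => hx'.2 ⟨Or.inr hx.1, hx.2⟩,
    disjoint_left.2 fun x hx hx' => hx'.2 ⟨Or.inl hx.1, hx.2⟩, fun p hp q hq hpq => ?_⟩
  obtain ⟨hq1, hqW⟩ := hpq.mem_of_isAdjClosed hcl hp
  exact hq.2 ⟨Or.inl hq1, hqW⟩

/-- If `C ⊆ W`, the part of `A1 ∪ C` outside `W` would be closed in `S`, contradicting the
connectedness of `S`. -/
theorem IsClosedCut.ncard_inter_lt (hS : ConnectedIn S) (h : IsClosedCut S C A1 A2)
    (hC : C.Finite) (hW : IsAdjClosed (A1 ∪ C) W) {p q : Pt} (hp : p ∈ A1 ∪ C) (hpW : p ∈ W)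
    (hq : q ∈ A1 ∪ C) (hqW : q ∉ W) : (C ∩ W).ncard < C.ncard := by
  refine ncard_lt_ncard (inter_subset_left.ssubset_of_not_superset fun hCW => ?_) hC
  have hV : IsAdjClosed S ((A1 ∪ C) \ W) := by
    rintro a - b hb hab ⟨haZ, haW⟩
    have ha1 : a ∈ A1 := haZ.resolve_right fun haC => haW (hCW haC).2
    have hbZ := h.mem_union_of_adjG ha1 hb hab
    exact ⟨hbZ, hW.compl a haZ b hbZ hab haW⟩
  have hZS : A1 ∪ C ⊆ S := union_subset h.1.2.1 h.1.1
  exact ((hS q (hZS hq) p (hZS hp)).mem_of_isAdjClosed hV ⟨hq, hqW⟩).2 hpW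

theorem lt_spanE_inter_or_lt_spanE_inter_compl (hC : C.Finite) (hF : F1.Finite) (U : Set Pt)
    (h : α * C.ncard < SpanE F1) :
    α * (C ∩ U).ncard < SpanE (F1 ∩ U) ∨ α * (C ∩ Uᶜ).ncard < SpanE (F1 ∩ Uᶜ) := by
  by_contra! hle
  have hspan : SpanE F1 ≤ SpanE (F1 ∩ U) + SpanE (F1 ∩ Uᶜ) := by
    conv_lhs => rw [← inter_union_compl F1 U]
    exact spanD_union_le zero_le_two (hF.subset inter_subset_left) (hF.subset inter_subset_left)
  have hcard : C.ncard = (C ∩ U).ncard + (C ∩ Uᶜ).ncard := by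
    conv_lhs => rw [← inter_union_compl C U]
    exact ncard_union_eq (disjoint_compl_right.mono inter_subset_right inter_subset_right)
      (hC.subset inter_subset_left) (hC.subset inter_subset_left)
  rw [hcard, Nat.cast_add, mul_add] at h
  linarith [hle.1, hle.2]

end Cut

section HeavyCut

/-- The finite witnesses `F1`, `F2` are needed because `SpanE` of an infinite set is the junk
value `sInf ∅ = 0`. -/
structure IsHeavyCut (S : Set Pt) (α : ℝ) (C A1 A2 F1 F2 : Set Pt) : Prop where
  isCut : IsCut S C A1 A2
  finite_cut : C.Finite
  finite_left : F1.Finite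
  finite_right : F2.Finite
  subset_left : F1 ⊆ A1 ∪ C
  subset_right : F2 ⊆ A2 ∪ C
  lt_spanE_left : α * C.ncard < SpanE F1
  lt_spanE_right : α * C.ncard < SpanE F2

variable {S C A1 A2 F1 F2 W : Set Pt} {α : ℝ}

theorem IsHeavyCut.symm (h : IsHeavyCut S α C A1 A2 F1 F2) : IsHeavyCut S α C A2 A1 F2 F1 :=
  ⟨h.isCut.symm, h.finite_cut, h.finite_right, h.finite_left, h.subset_right, h.subset_left,
    h.lt_spanE_right, h.lt_spanE_left⟩

theorem IsHeavyCut.exists_isClosedCut (h : IsHeavyCut S α C A1 A2 F1 F2) :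
    ∃ B1 B2, IsClosedCut S C B1 B2 ∧ IsHeavyCut S α C B1 B2 F1 F2 := by
  obtain ⟨B1, B2, hAB1, hAB2, hcl⟩ := h.isCut.exists_isClosedCut
  exact ⟨B1, B2, hcl, hcl.1, h.finite_cut, h.finite_left, h.finite_right,
    h.subset_left.trans (union_subset_union_left C hAB1),
    h.subset_right.trans (union_subset_union_left C hAB2), h.lt_spanE_left, h.lt_spanE_right⟩

theorem IsHeavyCut.inter (hα : 0 ≤ α) (h : IsHeavyCut S α C A1 A2 F1 F2)
    (hcl : IsClosedCut S C A1 A2) (hW : IsAdjClosed (A1 ∪ C) W)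
    (hs : α * (C ∩ W).ncard < SpanE (F1 ∩ W)) :
    IsHeavyCut S α (C ∩ W) (A1 ∩ W) (S \ ((A1 ∪ C) ∩ W)) (F1 ∩ W) F2 where
  isCut := hcl.isCut_inter hW
  finite_cut := h.finite_cut.subset inter_subset_left
  finite_left := h.finite_left.subset inter_subset_left
  finite_right := h.finite_right
  subset_left := by
    rw [← union_inter_distrib_right]
    exact inter_subset_inter_left W h.subset_left
  subset_right x hx := by
    by_cases hxW : x ∈ (A1 ∪ C) ∩ W
    · refine Or.inr ⟨(h.subset_right hx).resolve_left fun hx2 => ?_, hxW.2⟩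
      exact hxW.1.elim (disjoint_left.1 h.isCut.2.2.2.2.2.1 · hx2)
        (disjoint_left.1 h.isCut.2.2.2.2.1 · hx2)
    · exact Or.inl ⟨union_subset h.isCut.2.2.1 h.isCut.1 (h.subset_right hx), hxW⟩
  lt_spanE_left := hs
  lt_spanE_right := by
    have := ncard_le_ncard (inter_subset_left (t := W)) h.finite_cut
    exact lt_of_le_of_lt (by gcongr) h.lt_spanE_right

theorem IsHeavyCut.exists_ncard_lt (hS : ConnectedIn S) (hα : 0 ≤ α)
    (h : IsHeavyCut S α C A1 A2 F1 F2) (hcl : IsClosedCut S C A1 A2)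
    (hdis : ¬ConnectedIn (A1 ∪ C)) :
    ∃ C' A1' A2' F1', IsHeavyCut S α C' A1' A2' F1' F2 ∧ C'.ncard < C.ncard := by
  obtain ⟨U, hU, p, hp, hpU, q, hq, hqU⟩ := exists_isAdjClosed_of_not_connectedIn hdis
  rcases lt_spanE_inter_or_lt_spanE_inter_compl h.finite_cut h.finite_left U
    h.lt_spanE_left with hs | hs
  · exact ⟨_, _, _, _, h.inter hα hcl hU hs,
      hcl.ncard_inter_lt hS h.finite_cut hU hp hpU hq hqU⟩
  · exact ⟨_, _, _, _, h.inter hα hcl hU.compl hs,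
      hcl.ncard_inter_lt hS h.finite_cut hU.compl hq hqU hp (not_not_intro hpU)⟩

theorem theta_le_of_isConnCut {C A1 A2 : Set Pt} {β : ℝ} (h : IsConnCut S C A1 A2)
    (hC : C.Finite) (hlt : α * C.ncard + β < min (SpanE (A1 ∪ C)) (SpanE (A2 ∪ C))) :
    theta S α β ≤ C.ncard :=
  sInf_le ⟨C, A1, A2, h, hC, rfl, hlt⟩

theorem IsHeavyCut.theta_le_of_connectedIn (h : IsHeavyCut S α C A1 A2 F1 F2)
    (h1 : ConnectedIn (A1 ∪ C)) (h2 : ConnectedIn (A2 ∪ C)) : theta S α 0 ≤ C.ncard := by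
  obtain ⟨H1, hFH1, hH1A, hH1, hH1c⟩ := h1.exists_finite_connectedIn_between
    (h.finite_left.union h.finite_cut) (union_subset h.subset_left subset_union_right)
  obtain ⟨H2, hFH2, hH2A, hH2, hH2c⟩ := h2.exists_finite_connectedIn_between
    (h.finite_right.union h.finite_cut) (union_subset h.subset_right subset_union_right)
  have e1 : H1 \ C ∪ C = H1 := sdiff_union_of_subset (subset_union_right.trans hFH1)
  have e2 : H2 \ C ∪ C = H2 := sdiff_union_of_subset (subset_union_right.trans hFH2)
  refine theta_le_of_isConnCut (A1 := H1 \ C) (A2 := H2 \ C)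
    ⟨h.isCut.mono (sdiff_subset_iff.2 (union_comm A1 C ▸ hH1A))
      (sdiff_subset_iff.2 (union_comm A2 C ▸ hH2A)), by rwa [e1], by rwa [e2]⟩ h.finite_cut ?_
  rw [e1, e2, add_zero]
  exact lt_min
    (h.lt_spanE_left.trans_le (spanD_mono zero_le_two (subset_union_left.trans hFH1) hH1))
    (h.lt_spanE_right.trans_le (spanD_mono zero_le_two (subset_union_left.trans hFH2) hH2))

theorem IsHeavyCut.theta_le (hS : ConnectedIn S) (hα : 0 ≤ α)
    (h : IsHeavyCut S α C A1 A2 F1 F2) : theta S α 0 ≤ C.ncard := by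
  induction hn : C.ncard using Nat.strong_induction_on generalizing C A1 A2 F1 F2 with
  | _ n ih =>
  have descend : ∀ {C' A1' A2' F1' F2'}, IsHeavyCut S α C' A1' A2' F1' F2' →
      C'.ncard < n → theta S α 0 ≤ n := fun h' hlt =>
    (ih _ hlt h' rfl).trans (by exact_mod_cast hlt.le)
  obtain ⟨B1, B2, hcl, hB⟩ := h.exists_isClosedCut
  by_cases h1 : ConnectedIn (B1 ∪ C)
  · by_cases h2 : ConnectedIn (B2 ∪ C)
    · exact hn ▸ hB.theta_le_of_connectedIn h1 h2
    · obtain ⟨_, _, _, _, h', hlt⟩ := hB.symm.exists_ncard_lt hS hα hcl.symm h2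
      exact descend h' (hn ▸ hlt)
  · obtain ⟨_, _, _, _, h', hlt⟩ := hB.exists_ncard_lt hS hα hcl h1
    exact descend h' (hn ▸ hlt)

end HeavyCut

theorem theta_le_one {S : Set Pt} {α : ℝ} {c : Pt} (hα : α ≤ 0) (hc : c ∈ S) :
    theta S α 0 ≤ 1 := by
  have hcut : IsConnCut S {c} ∅ ∅ :=
    ⟨⟨singleton_subset_iff.2 hc, empty_subset _, empty_subset _, disjoint_empty _,
      disjoint_empty _, disjoint_empty _, fun _ h => h.elim⟩,
      (empty_union {c}).symm ▸ connectedIn_singleton c,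
      (empty_union {c}).symm ▸ connectedIn_singleton c⟩
  have h6 := three_mul_le_spanD zero_le_two (finite_singleton c) (singleton_nonempty c)
  simpa using theta_le_of_isConnCut hcut (finite_singleton c)
    (by simp only [empty_union, ncard_singleton, min_self, Nat.cast_one]; unfold SpanE; linarith)

theorem theta_le_ncard_of_isCut {S C A1 A2 : Set Pt} {α : ℝ} (hS : ConnectedIn S)
    (h : IsCut S C A1 A2) (hC : C.Finite)
    (hlt : α * C.ncard < min (SpanE (A1 ∪ C)) (SpanE (A2 ∪ C))) : theta S α 0 ≤ C.ncard := by
  rcases le_or_gt α 0 with hα | hα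
  · obtain ⟨c, hc⟩ := h.nonempty_of_lt_spanE hS hlt
    calc theta S α 0 ≤ 1 := theta_le_one hα (h.1 hc)
      _ ≤ C.ncard := by exact_mod_cast (ncard_pos hC).2 ⟨c, hc⟩
  · have hpos := (mul_nonneg hα.le (Nat.cast_nonneg C.ncard)).trans_lt hlt
    rw [lt_min_iff] at hlt hpos
    exact IsHeavyCut.theta_le hS hα.le ⟨h, hC, finite_of_spanD_pos hpos.1,
      finite_of_spanD_pos hpos.2, subset_rfl, subset_rfl, hlt.1, hlt.2⟩

/-- For connected `S`, the thickness via arbitrary cuts equals the thickness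
via connected cuts with offset zero: `Θ(S,α) = θ(S,α,0)`. -/
theorem bigTheta_eq_theta (S : Set Pt) (α : ℝ) (hS : ConnectedIn S) :
    bigTheta S α = theta S α 0 := by
  refine le_antisymm (sInf_le_sInf ?_) (le_sInf ?_)
  · rintro k ⟨C, A1, A2, hconn, hC, hk, hlt⟩
    exact ⟨C, A1, A2, hconn.1, hC, hk, by rwa [add_zero] at hlt⟩
  · rintro _ ⟨C, A1, A2, hcut, hC, rfl, hlt⟩
    exact theta_le_ncard_of_isCut hS hcut hC hlt
end
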